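/- Every connected {C4,P4}-free graph on at least one vertex has a universal vertex. -/

import Mathlib

/-!
Take a vertex `v` of maximum degree. If some `u` at distance two from `v`, say through `w`,
were not adjacent to `v`, then every other neighbour `x` of `v` would be adjacent to `w`
(otherwise `x v w u` is an induced `P₄` or `C₄`). The closed neighbourhood of `w` would then
strictly contain that of `v`, contradicting maximality. So the closed neighbourhood of `v` is
closed under adjacency, and by connectedness it is everything.
-/

namespace SimpleGraph

variable {V : Type*} {G : SimpleGraph V}

lemma nonempty_pathGraph_four_embedding {a b c d : V} (hab : G.Adj a b) (hbc : G.Adj b c)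
    (hcd : G.Adj c d) (hac : ¬G.Adj a c) (had : ¬G.Adj a d) (hbd : ¬G.Adj b d) :
    Nonempty (pathGraph 4 ↪g G) := by
  have hac' : a ≠ c := by rintro rfl; exact had hcd
  have had' : a ≠ d := by rintro rfl; exact hbd hab.symm
  have hbd' : b ≠ d := by rintro rfl; exact had hab
  refine ⟨⟨⟨![a, b, c, d], fun i j h => ?_⟩, fun {i j} => ?_⟩⟩
  all_goals try show G.Adj (![a, b, c, d] i) (![a, b, c, d] j) ↔ _
  all_goals fin_cases i <;> fin_cases j <;>
    simp_all [pathGraph_adj, hab.ne, hbc.ne, hcd.ne, hab.ne', hbc.ne', hcd.ne', hac'.symm,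
      had'.symm, hbd'.symm, G.adj_comm b a, G.adj_comm c a, G.adj_comm c b, G.adj_comm d a,
      G.adj_comm d b, G.adj_comm d c]

lemma nonempty_cycleGraph_four_embedding {a b c d : V} (hab : G.Adj a b) (hbc : G.Adj b c)
    (hcd : G.Adj c d) (hda : G.Adj d a) (hac : ¬G.Adj a c) (hbd : ¬G.Adj b d) (hac' : a ≠ c)
    (hbd' : b ≠ d) : Nonempty (cycleGraph 4 ↪g G) := by
  refine ⟨⟨⟨![a, b, c, d], fun i j h => ?_⟩, fun {i j} => ?_⟩⟩
  all_goals try show G.Adj (![a, b, c, d] i) (![a, b, c, d] j) ↔ _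
  all_goals fin_cases i <;> fin_cases j <;>
    simp_all [cycleGraph_adj, hab.ne, hbc.ne, hcd.ne, hda.ne, hab.ne', hbc.ne', hcd.ne', hda.ne',
      hac'.symm, hbd'.symm, G.adj_comm b a, G.adj_comm c a, G.adj_comm c b, G.adj_comm d a,
      G.adj_comm d b, G.adj_comm d c] <;> decide

lemma adj_of_adj_of_adj_of_not_adj (hC₄ : IsEmpty (cycleGraph 4 ↪g G))
    (hP₄ : IsEmpty (pathGraph 4 ↪g G)) {v w u x : V} (hvw : G.Adj v w) (hwu : G.Adj w u)
    (hvu : ¬G.Adj v u) (huv : u ≠ v) (hvx : G.Adj v x) (hxw : x ≠ w) : G.Adj x w := by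
  by_contra hxw'
  by_cases hxu : G.Adj x u
  · exact hC₄.false (nonempty_cycleGraph_four_embedding hvx.symm hvw hwu hxu.symm hxw' hvu
      hxw huv.symm).some
  · exact hP₄.false (nonempty_pathGraph_four_embedding hvx.symm hvw hwu hxw' hxu hvu).some

lemma insert_neighborFinset_ssubset [DecidableEq V] [G.LocallyFinite]
    (hC₄ : IsEmpty (cycleGraph 4 ↪g G)) (hP₄ : IsEmpty (pathGraph 4 ↪g G))
    {v w u : V} (hvw : G.Adj v w) (hwu : G.Adj w u) (hvu : ¬G.Adj v u) (huv : u ≠ v) :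
    insert v (G.neighborFinset v) ⊂ insert w (G.neighborFinset w) := by
  refine (Finset.ssubset_iff_of_subset fun x hx => ?_).2 ⟨u, by simp [hwu], by simp [hvu, huv]⟩
  rw [Finset.mem_insert, mem_neighborFinset] at hx ⊢
  rcases hx with rfl | hvx
  · exact .inr hvw.symm
  · by_cases hxw : x = w
    · exact .inl hxw
    · exact .inr (adj_of_adj_of_adj_of_not_adj hC₄ hP₄ hvw hwu hvu huv hvx hxw).symm

lemma adj_of_adj_of_forall_degree_le [G.LocallyFinite]
    (hC₄ : IsEmpty (cycleGraph 4 ↪g G)) (hP₄ : IsEmpty (pathGraph 4 ↪g G)) {v w u : V}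
    (hmax : ∀ x, G.degree x ≤ G.degree v) (hvw : G.Adj v w) (hwu : G.Adj w u) (huv : u ≠ v) :
    G.Adj v u := by
  classical
  by_contra hvu
  have := Finset.card_lt_card (insert_neighborFinset_ssubset hC₄ hP₄ hvw hwu hvu huv)
  rw [Finset.card_insert_of_notMem (by simp), Finset.card_insert_of_notMem (by simp),
    card_neighborFinset_eq_degree, card_neighborFinset_eq_degree] at this
  exact (hmax w).not_gt (by omega)

lemma eq_or_adj_of_reachable_of_forall_degree_le [G.LocallyFinite]
    (hC₄ : IsEmpty (cycleGraph 4 ↪g G)) (hP₄ : IsEmpty (pathGraph 4 ↪g G)) {v u : V}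
    (hmax : ∀ x, G.degree x ≤ G.degree v) (hvu : G.Reachable v u) : u = v ∨ G.Adj v u := by
  rw [reachable_eq_reflTransGen] at hvu
  induction hvu with
  | refl => exact .inl rfl
  | @tail w u _ hwu ih =>
    by_cases huv : u = v
    · exact .inl huv
    rcases ih with rfl | hvw
    · exact .inr hwu
    · exact .inr (adj_of_adj_of_forall_degree_le hC₄ hP₄ hmax hvw hwu huv)

end SimpleGraph

/-- Every connected `{C₄, P₄}`-free graph (on at least one vertex) has a universal
vertex. -/
theorem connected_quasiThreshold_has_universal {V : Type*} [Fintype V]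
    (G : SimpleGraph V)
    (hfree : IsEmpty (SimpleGraph.cycleGraph 4 ↪g G) ∧
             IsEmpty (SimpleGraph.pathGraph 4 ↪g G))
    (hconn : G.Connected) :
    ∃ v : V, ∀ u : V, u ≠ v → G.Adj v u := by
  classical
  obtain ⟨hC₄, hP₄⟩ := hfree
  have : Nonempty V := hconn.nonempty
  obtain ⟨v, hv⟩ := G.exists_maximal_degree_vertex
  have hmax : ∀ x, G.degree x ≤ G.degree v := fun x => hv ▸ G.degree_le_maxDegree x
  refine ⟨v, fun u huv => ?_⟩
  exact (SimpleGraph.eq_or_adj_of_reachable_of_forall_degree_le hC₄ hP₄ hmax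
    (hconn v u)).resolve_left huv
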